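/- For a connected non-bipartite K-regular graph, iterating the mean-aggregation operator T = (I + A/K)·(K/(K+1)) (equivalently (I+A)/(K+1) acting on features, where A is the normalized adjacency) converges: T^l H tends to the constant vector whose entries are the average of H, for every initial feature vector H. -/

import Mathlib

/-!
Regularity makes `T = (I + A) / (K + 1)` doubly stochastic, and since `T` is positive on the
diagonal and along edges, connectivity makes every entry of `T ^ |V|` at least some `ε > 0`.
A row-stochastic matrix whose entries are all at least `ε` shrinks the oscillation `max x - min x`
of a vector by the factor `1 - |V| ε < 1` (Dobrushin), while column sums one preserve `∑ x`.
Hence the iterates become constant at a geometric rate, and the constant is the mean of `H`.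
-/

open Finset Filter Topology

namespace Matrix

lemma mul_apply_pos {n : Type*} [Fintype n] {A B : Matrix n n ℝ}
    (hA : ∀ i j, 0 ≤ A i j) (hB : ∀ i j, 0 ≤ B i j) {i j : n} (k : n)
    (hAk : 0 < A i k) (hBk : 0 < B k j) : 0 < (A * B) i j := by
  rw [mul_apply]
  exact (mul_pos hAk hBk).trans_le <|
    single_le_sum (fun k _ => mul_nonneg (hA i k) (hB k j)) (mem_univ k)

section Oscillation

variable {n : Type*} [Fintype n] [Nonempty n]

noncomputable def oscillation (x : n → ℝ) : ℝ :=
  univ.sup' univ_nonempty x - univ.inf' univ_nonempty x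

lemma sub_le_oscillation (x : n → ℝ) (i j : n) : x i - x j ≤ oscillation x :=
  sub_le_sub (le_sup' x (mem_univ i)) (inf'_le x (mem_univ j))

lemma exists_oscillation_eq_sub (x : n → ℝ) : ∃ i j, oscillation x = x i - x j := by
  obtain ⟨i, -, hi⟩ := exists_mem_eq_sup' univ_nonempty x
  obtain ⟨j, -, hj⟩ := exists_mem_eq_inf' univ_nonempty x
  exact ⟨i, j, by rw [oscillation, hi, hj]⟩

lemma oscillation_nonneg (x : n → ℝ) : 0 ≤ oscillation x := by
  simpa using sub_le_oscillation x (Classical.arbitrary n) (Classical.arbitrary n)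

lemma abs_sub_mean_le_oscillation (x : n → ℝ) (i : n) :
    |x i - (∑ j, x j) / Fintype.card n| ≤ oscillation x := by
  obtain ⟨k, l, hkl⟩ := exists_oscillation_eq_sub x
  have hcard : (0 : ℝ) < Fintype.card n := by exact_mod_cast Fintype.card_pos
  have hmax (j : n) : x j ≤ x k := by linarith [sub_le_oscillation x j l]
  have hmin (j : n) : x l ≤ x j := by linarith [sub_le_oscillation x k j]
  have hmean_le : (∑ j, x j) / Fintype.card n ≤ x k := by
    rw [div_le_iff₀' hcard]
    simpa using sum_le_card_nsmul univ x (x k) fun j _ => hmax j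
  have hle_mean : x l ≤ (∑ j, x j) / Fintype.card n := by
    rw [le_div_iff₀' hcard]
    simpa using card_nsmul_le_sum univ x (x l) fun j _ => hmin j
  rw [abs_le]
  constructor <;> linarith [hmax i, hmin i]

variable [DecidableEq n] {S : Matrix n n ℝ}

/-- Dobrushin's coupling bound: the mass `∑ k, min (S i k) (S j k)` common to rows `i` and `j`
meets the same values of `x` and cancels. -/
lemma mulVec_sub_mulVec_le (hS : S ∈ rowStochastic ℝ n) (x : n → ℝ) (i j : n) :
    (S *ᵥ x) i - (S *ᵥ x) j ≤ (1 - ∑ k, min (S i k) (S j k)) * oscillation x := by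
  obtain ⟨k₁, k₂, hosc⟩ := exists_oscillation_eq_sub x
  set μ := fun k => min (S i k) (S j k)
  calc (S *ᵥ x) i - (S *ᵥ x) j
      = ∑ k, (S i k - μ k) * x k - ∑ k, (S j k - μ k) * x k := by
        simp only [mulVec, dotProduct, ← sum_sub_distrib]
        exact sum_congr rfl fun k _ => by ring
    _ ≤ ∑ k, (S i k - μ k) * x k₁ - ∑ k, (S j k - μ k) * x k₂ := by
        gcongr with k _ k _
        · exact sub_nonneg.mpr (min_le_left _ _)
        · linarith [sub_le_oscillation x k k₂]
        · exact sub_nonneg.mpr (min_le_right _ _)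
        · linarith [sub_le_oscillation x k₁ k]
    _ = (1 - ∑ k, μ k) * oscillation x := by
        simp only [← sum_mul, sum_sub_distrib, sum_row_of_mem_rowStochastic hS, hosc]
        ring

lemma card_mul_le_one (hS : S ∈ rowStochastic ℝ n) {ε : ℝ} (hε : ∀ i j, ε ≤ S i j) :
    Fintype.card n * ε ≤ 1 := by
  have i := Classical.arbitrary n
  simpa [sum_row_of_mem_rowStochastic hS i] using card_nsmul_le_sum univ (S i) ε fun j _ => hε i j

lemma oscillation_mulVec_le (hS : S ∈ rowStochastic ℝ n) {ε : ℝ} (hε : ∀ i j, ε ≤ S i j)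
    (x : n → ℝ) : oscillation (S *ᵥ x) ≤ (1 - Fintype.card n * ε) * oscillation x := by
  obtain ⟨i, j, hij⟩ := exists_oscillation_eq_sub (S *ᵥ x)
  have hmass : Fintype.card n * ε ≤ ∑ k, min (S i k) (S j k) := by
    simpa using card_nsmul_le_sum univ _ ε fun k _ => le_min (hε i k) (hε j k)
  rw [hij]
  exact (mulVec_sub_mulVec_le hS x i j).trans <|
    mul_le_mul_of_nonneg_right (by linarith) (oscillation_nonneg x)

lemma oscillation_pow_mulVec_le (hS : S ∈ rowStochastic ℝ n) {ε : ℝ} (hε : ∀ i j, ε ≤ S i j)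
    (q : ℕ) (x : n → ℝ) :
    oscillation ((S ^ q) *ᵥ x) ≤ (1 - Fintype.card n * ε) ^ q * oscillation x := by
  have hr : 0 ≤ 1 - Fintype.card n * ε := sub_nonneg.mpr (card_mul_le_one hS hε)
  induction q with
  | zero => simp
  | succ q ih =>
    calc oscillation ((S ^ (q + 1)) *ᵥ x) = oscillation (S *ᵥ (S ^ q) *ᵥ x) := by
          rw [pow_succ', mulVec_mulVec]
      _ ≤ (1 - Fintype.card n * ε) * ((1 - Fintype.card n * ε) ^ q * oscillation x) :=
          (oscillation_mulVec_le hS hε _).trans (mul_le_mul_of_nonneg_left ih hr)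
      _ = (1 - Fintype.card n * ε) ^ (q + 1) * oscillation x := by ring

theorem tendsto_pow_mulVec_mean_of_doublyStochastic (hS : S ∈ doublyStochastic ℝ n) {D : ℕ}
    (hD0 : D ≠ 0) (hD : ∀ i j, 0 < (S ^ D) i j) (x : n → ℝ) :
    Tendsto (fun l => (S ^ l) *ᵥ x) atTop (𝓝 fun _ => (∑ i, x i) / Fintype.card n) := by
  have hrow : S ∈ rowStochastic ℝ n :=
    (mem_doublyStochastic_iff_mem_rowStochastic_and_mem_colStochastic.mp hS).1
  obtain ⟨p, hp⟩ := Finite.exists_min fun p : n × n => (S ^ D) p.1 p.2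
  have hmin (i j : n) : (S ^ D) p.1 p.2 ≤ (S ^ D) i j := hp (i, j)
  set r := 1 - Fintype.card n * (S ^ D) p.1 p.2
  have hr0 : 0 ≤ r := sub_nonneg.mpr (card_mul_le_one (pow_mem hrow D) hmin)
  have hr1 : r < 1 := by
    have hcard : (0 : ℝ) < Fintype.card n := by exact_mod_cast Fintype.card_pos
    linarith [mul_pos hcard (hD p.1 p.2)]
  have hdecay (l : ℕ) : oscillation ((S ^ l) *ᵥ x) ≤ r ^ (l / D) * oscillation x := by
    have hsplit : S ^ l = (S ^ D) ^ (l / D) * S ^ (l % D) := by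
      rw [← pow_mul, ← pow_add, Nat.div_add_mod]
    calc oscillation ((S ^ l) *ᵥ x)
        = oscillation (((S ^ D) ^ (l / D)) *ᵥ (S ^ (l % D)) *ᵥ x) := by
          rw [hsplit, mulVec_mulVec]
      _ ≤ r ^ (l / D) * oscillation ((S ^ (l % D)) *ᵥ x) :=
          oscillation_pow_mulVec_le (pow_mem hrow D) hmin _ _
      _ ≤ r ^ (l / D) * oscillation x := by
          gcongr
          simpa using oscillation_pow_mulVec_le hrow
            (fun i j => nonneg_of_mem_rowStochastic hrow (i := i) (j := j)) (l % D) x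
  have hlim : Tendsto (fun l => r ^ (l / D) * oscillation x) atTop (𝓝 0) := by
    simpa using ((tendsto_pow_atTop_nhds_zero_of_lt_one hr0 hr1).comp
      (Nat.tendsto_div_const_atTop hD0)).mul_const (oscillation x)
  refine tendsto_pi_nhds.mpr fun i => tendsto_iff_norm_sub_tendsto_zero.mpr <|
    squeeze_zero (fun _ => norm_nonneg _) (fun l => ?_) hlim
  rw [Real.norm_eq_abs, ← sum_mulVec_of_mem_doublyStochastic (pow_mem hS l)]
  exact (abs_sub_mean_le_oscillation _ i).trans (hdecay l)

end Oscillation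

end Matrix

namespace SimpleGraph

open Matrix

section Positivity

variable {V : Type*} [Fintype V] [DecidableEq V] {G : SimpleGraph V} {S : Matrix V V ℝ}

/-- The positive diagonal lets a walk idle, so any walk of length at most `l` suffices. -/
lemma Walk.pow_apply_pos (hS0 : ∀ i j, 0 ≤ S i j) (hS : ∀ i j, i = j ∨ G.Adj i j → 0 < S i j)
    {u v : V} (p : G.Walk u v) {l : ℕ} (hl : p.length ≤ l) : 0 < (S ^ l) u v := by
  induction l generalizing u with
  | zero =>
    obtain rfl := p.eq_of_length_eq_zero (Nat.le_zero.mp hl)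
    simp
  | succ l ih =>
    rw [pow_succ']
    cases p with
    | nil =>
      exact mul_apply_pos hS0 (pow_apply_nonneg hS0 l) v (hS v v (.inl rfl)) (ih .nil l.zero_le)
    | cons h q =>
      exact mul_apply_pos hS0 (pow_apply_nonneg hS0 l) _ (hS _ _ (.inr h))
        (ih q (by simpa using hl))

lemma Connected.pow_card_apply_pos (hG : G.Connected) (hS0 : ∀ i j, 0 ≤ S i j)
    (hS : ∀ i j, i = j ∨ G.Adj i j → 0 < S i j) (u v : V) : 0 < (S ^ Fintype.card V) u v := by
  obtain ⟨p, hp⟩ := hG.preconnected.exists_isPath u v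
  exact p.pow_apply_pos hS0 hS hp.length_lt.le

end Positivity

section MeanAggregation

variable {V : Type*} [DecidableEq V] (G : SimpleGraph V) [DecidableRel G.Adj]

noncomputable def meanAggregation (K : ℕ) : Matrix V V ℝ := (K + 1 : ℝ)⁻¹ • (1 + G.adjMatrix ℝ)

lemma meanAggregation_apply (K : ℕ) (a b : V) :
    G.meanAggregation K a b = if a = b ∨ G.Adj a b then 1 / (K + 1 : ℝ) else 0 := by
  by_cases hab : a = b
  · subst hab
    simp [meanAggregation]
  · by_cases hadj : G.Adj a b <;> simp [meanAggregation, one_apply, hab, hadj]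

lemma meanAggregation_nonneg (K : ℕ) (a b : V) : 0 ≤ G.meanAggregation K a b := by
  rw [meanAggregation_apply]
  split <;> positivity

lemma meanAggregation_pos {K : ℕ} {a b : V} (h : a = b ∨ G.Adj a b) :
    0 < G.meanAggregation K a b := by
  rw [meanAggregation_apply, if_pos h]
  positivity

lemma meanAggregation_mem_doublyStochastic [Fintype V] {K : ℕ} (hreg : G.IsRegularOfDegree K) :
    G.meanAggregation K ∈ doublyStochastic ℝ V := by
  have hrow : G.meanAggregation K *ᵥ 1 = 1 := by
    ext v
    have hdeg := adjMatrix_mulVec_const_apply_of_regular (α := ℝ) hreg (a := 1) (v := v)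
    simp only [meanAggregation, smul_mulVec, add_mulVec, one_mulVec, Pi.smul_apply, Pi.add_apply,
      Pi.one_apply, smul_eq_mul]
    rw [← Function.const_one, hdeg, mul_one, add_comm]
    exact inv_mul_cancel₀ (by positivity)
  have hsymm : (G.meanAggregation K)ᵀ = G.meanAggregation K := by
    simp [meanAggregation, transpose_adjMatrix]
  refine ⟨G.meanAggregation_nonneg K, hrow, ?_⟩
  rw [← mulVec_transpose, hsymm, hrow]

end MeanAggregation

end SimpleGraph

theorem mean_aggregation_oversmoothing_general {V : Type*} [Fintype V]
    [DecidableEq V]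
    (G : SimpleGraph V) [DecidableRel G.Adj]
    (hconn : G.Connected)
    (K : ℕ) (hreg : G.IsRegularOfDegree K)
    (T : Matrix V V ℝ)
    (hT : T = fun a b => if a = b ∨ G.Adj a b then 1 / (K + 1 : ℝ) else 0) :
    ∀ H : V → ℝ,
      Filter.Tendsto (fun l : ℕ => (T ^ l).mulVec H) Filter.atTop
        (nhds (fun _ => (∑ v, H v) / (Fintype.card V : ℝ))) := by
  have := hconn.nonempty
  obtain rfl : T = G.meanAggregation K :=
    hT.trans (funext₂ fun a b => (G.meanAggregation_apply K a b).symm)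
  exact Matrix.tendsto_pow_mulVec_mean_of_doublyStochastic
    (G.meanAggregation_mem_doublyStochastic hreg) Fintype.card_ne_zero
    (hconn.pow_card_apply_pos (G.meanAggregation_nonneg K) fun _ _ => G.meanAggregation_pos)

theorem mean_aggregation_oversmoothing {V : Type*} [Fintype V] [Nonempty V]
    [DecidableEq V]
    (G : SimpleGraph V) [DecidableRel G.Adj]
    (hconn : G.Connected) (hnonbip : ¬ G.Colorable 2)
    (K : ℕ) (hreg : G.IsRegularOfDegree K)
    (T : Matrix V V ℝ)
    (hT : T = fun a b => if a = b ∨ G.Adj a b then 1 / (K + 1 : ℝ) else 0) :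
    ∀ H : V → ℝ,
      Filter.Tendsto (fun l : ℕ => (T ^ l).mulVec H) Filter.atTop
        (nhds (fun _ => (∑ v, H v) / (Fintype.card V : ℝ))) :=
  mean_aggregation_oversmoothing_general G hconn K hreg T hT
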